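/- arXiv:2106.03681 — 2 statements merged into one kernel-verified Lean document; each statement's English description precedes it below -/
import Mathlib

section
/- Let (E,F) be a uniformly self-similar ends space. Then there exists an involution τ ∈ Homeo(E,F) whose normal closure is all of Homeo(E,F); that is, Homeo(E,F) is normally generated by a single involution. -/
section EndsSpace

variable {E : Type*} [TopologicalSpace E]

/-- A homeomorphism of pairs from `(A, A ∩ F)` to `(B, B ∩ F)`:
a homeomorphism of the subspaces `A → B` carrying `A ∩ F` onto `B ∩ F`. -/
def PairHomeo (F A B : Set E) : Prop :=
  ∃ h : A ≃ₜ B, ∀ x : A, ((h x : E) ∈ F ↔ (x : E) ∈ F)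

/-- `(E, F)` is self-similar: every partition of `E` into finitely many pairwise
disjoint nonempty clopen sets has a piece containing a clopen set `D` with
`(D, D ∩ F)` homeomorphic (as a pair) to `(E, F)`. -/
def SelfSimilarPair (F : Set E) : Prop :=
  ∀ (n : ℕ) (P : Fin n → Set E),
    (∀ i, IsClopen (P i)) → (∀ i, (P i).Nonempty) →
    Pairwise (Function.onFun Disjoint P) → (⋃ i, P i) = Set.univ →
    ∃ i, ∃ D : Set E, IsClopen D ∧ D ⊆ P i ∧ PairHomeo F D Set.univ

/-- The preorder `x ≼ y` on ends: every clopen neighborhood `U` of `y` contains a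
clopen set `D` for which there are a clopen neighborhood `V` of `x` and a
homeomorphism of pairs `(V, V ∩ F) → (D, D ∩ F)`. -/
def EndsLE (F : Set E) (x y : E) : Prop :=
  ∀ U : Set E, IsClopen U → y ∈ U →
    ∃ D : Set E, D ⊆ U ∧ IsClopen D ∧
      ∃ V : Set E, IsClopen V ∧ x ∈ V ∧ PairHomeo F V D

/-- The equivalence `x ∼ y`: `x ≼ y` and `y ≼ x`. -/
def EndsEquiv (F : Set E) (x y : E) : Prop := EndsLE F x y ∧ EndsLE F y x

/-- `x` is a maximal end. -/
def MaximalEnd (F : Set E) (x : E) : Prop := ∀ y, EndsLE F x y → EndsLE F y x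

/-- `M(E)`, the set of maximal ends. -/
def MaxSet (F : Set E) : Set E := {x | MaximalEnd F x}

/-- `(E, F)` is uniformly self-similar: it is self-similar, `M(E)` is a single
`∼`-equivalence class, and `M(E)` is homeomorphic to the Cantor space `ℕ → Bool`. -/
def UniformlySelfSimilar (F : Set E) : Prop :=
  SelfSimilarPair F ∧
  (∃ x, MaxSet F = {y | EndsEquiv F x y}) ∧
  Nonempty (↥(MaxSet F) ≃ₜ (ℕ → Bool))

/-- The group `Homeo(E,F)` of homeomorphisms of `E` preserving `F`,
as a subgroup of the permutation group of `E`. -/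
def EndsHomeo (F : Set E) : Subgroup (Equiv.Perm E) where
  carrier := {h | Continuous h ∧ Continuous h.symm ∧ ∀ x, h x ∈ F ↔ x ∈ F}
  one_mem' := ⟨continuous_id, continuous_id, fun _ => Iff.rfl⟩
  mul_mem' := by
    rintro a b ⟨ha1, ha2, ha3⟩ ⟨hb1, hb2, hb3⟩
    refine ⟨?_, ?_, fun x => ?_⟩
    · exact ha1.comp hb1
    · exact hb2.comp ha2
    · exact (ha3 (b x)).trans (hb3 x)
  inv_mem' := by
    rintro a ⟨ha1, ha2, ha3⟩
    refine ⟨ha2, ha1, fun x => ?_⟩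
    have h := ha3 (a⁻¹ x)
    rw [Equiv.Perm.coe_inv, Equiv.apply_symm_apply] at h
    exact h.symm

/-- A half-space of `(E,F)`: a clopen set meeting `M(E)` in a nonempty proper subset. -/
def IsHalfSpace (F H : Set E) : Prop :=
  IsClopen H ∧ (H ∩ MaxSet F).Nonempty ∧ H ∩ MaxSet F ⊂ MaxSet F

/-- `φ` is an `H`-translation: the sets `φⁿ(H)`, `n ∈ ℤ`, are pairwise disjoint. -/
def IsHTranslation (H : Set E) (φ : Equiv.Perm E) : Prop :=
  ∀ m n : ℤ, m ≠ n → Disjoint ((φ ^ m) '' H) ((φ ^ n) '' H)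

/-- A homeomorphism is supported on `H` if it fixes every point outside `H`. -/
def SupportedOn (H : Set E) (h : Equiv.Perm E) : Prop := ∀ x ∉ H, h x = x

end EndsSpace

/-!
Fix four maximal ends `x₀, …, x₃`; maximal ends are stable (every neighbourhood contains a copy
of `(E, F)`) and, `M(E)` being a Cantor set, accumulate at each other. Inside a clopen
neighbourhood `Q` of `x₀` avoiding the others there are pairwise disjoint copies `H n`, `n : ℤ`, of
`K = Qᶜ` converging to `x₀`. Gluing the identifications `K ≅ H n` gives the involution `τ`
exchanging `H (2k)` and `H (2k + 1)` and the shift `σ : H n → H (n + 1)`; then `κ = τ σ τ σ⁻¹`,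
which lies in the normal closure `N` of `τ`, moves the even copies down by two and the odd ones up.
If `g` is supported on `H 0` and `Γ` applies a copy of `g` on each `H n` with `n ≥ 0` even, then
`g = Γ κ⁻¹ Γ⁻¹ κ ∈ N`; conjugating by a swap of `K` and `H 0`, every homeomorphism fixing `Q`
pointwise lies in `N`. Finally, a fragmentation argument writes every homeomorphism as a product
of elements each fixing pointwise a copy of `Q` placed near one of the stable ends `x₁, x₂, x₃`;
such elements are conjugate to elements fixing `Q`.
-/

open Set Filter Topology Function
open scoped Pointwise

section

variable {E : Type*} [TopologicalSpace E]

/-- A homeomorphism of pairs `(A, A ∩ F) → (B, B ∩ F)` given by maps `E → E`: unlike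
homeomorphisms of subtypes, these are easy to glue. -/
structure PartialPairHomeo (F A B : Set E) where
  toFun : E → E
  invFun : E → E
  mapsTo : MapsTo toFun A B
  mapsTo_invFun : MapsTo invFun B A
  leftInvOn : LeftInvOn invFun toFun A
  rightInvOn : RightInvOn invFun toFun B
  continuousOn : ContinuousOn toFun A
  continuousOn_invFun : ContinuousOn invFun B
  mem_iff : ∀ x ∈ A, toFun x ∈ F ↔ x ∈ F

namespace PartialPairHomeo

variable {F A B C : Set E}

instance : CoeFun (PartialPairHomeo F A B) fun _ => E → E := ⟨toFun⟩

theorem symm_mem_iff (p : PartialPairHomeo F A B) {y : E} (hy : y ∈ B) :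
    p.invFun y ∈ F ↔ y ∈ F := by
  rw [← p.mem_iff _ (p.mapsTo_invFun hy), p.rightInvOn hy]

protected def symm (p : PartialPairHomeo F A B) : PartialPairHomeo F B A :=
  ⟨p.invFun, p.toFun, p.mapsTo_invFun, p.mapsTo, p.rightInvOn, p.leftInvOn,
    p.continuousOn_invFun, p.continuousOn, fun _ => p.symm_mem_iff⟩

protected def refl (F A : Set E) : PartialPairHomeo F A A :=
  ⟨id, id, mapsTo_id A, mapsTo_id A, fun _ _ => rfl, fun _ _ => rfl,
    continuousOn_id, continuousOn_id, fun _ _ => Iff.rfl⟩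

protected def trans (p : PartialPairHomeo F A B) (q : PartialPairHomeo F B C) :
    PartialPairHomeo F A C where
  toFun := q ∘ p
  invFun := p.invFun ∘ q.invFun
  mapsTo := q.mapsTo.comp p.mapsTo
  mapsTo_invFun := p.mapsTo_invFun.comp q.mapsTo_invFun
  leftInvOn := p.leftInvOn.comp q.leftInvOn p.mapsTo
  rightInvOn := p.rightInvOn.comp q.rightInvOn q.mapsTo_invFun
  continuousOn := q.continuousOn.comp p.continuousOn p.mapsTo
  continuousOn_invFun := p.continuousOn_invFun.comp q.continuousOn_invFun q.mapsTo_invFun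
  mem_iff x hx := (q.mem_iff _ (p.mapsTo hx)).trans (p.mem_iff x hx)

def restrict (p : PartialPairHomeo F A B) {A₀ : Set E} (h : A₀ ⊆ A) :
    PartialPairHomeo F A₀ (p '' A₀) where
  toFun := p
  invFun := p.invFun
  mapsTo := mapsTo_image _ _
  mapsTo_invFun := by
    rintro _ ⟨x, hx, rfl⟩
    rwa [p.leftInvOn (h hx)]
  leftInvOn := p.leftInvOn.mono h
  rightInvOn := p.rightInvOn.mono (p.mapsTo.mono_left h).image_subset
  continuousOn := p.continuousOn.mono h
  continuousOn_invFun := p.continuousOn_invFun.mono (p.mapsTo.mono_left h).image_subset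
  mem_iff x hx := p.mem_iff x (h hx)

theorem image_eq_inter_preimage (p : PartialPairHomeo F A B) {A₀ : Set E} (h : A₀ ⊆ A) :
    p '' A₀ = B ∩ p.invFun ⁻¹' A₀ := by
  ext y
  constructor
  · rintro ⟨x, hx, rfl⟩
    exact ⟨p.mapsTo (h hx), by rwa [mem_preimage, p.leftInvOn (h hx)]⟩
  · rintro ⟨hy, hy₀⟩
    exact ⟨_, hy₀, p.rightInvOn hy⟩

theorem image_eq (p : PartialPairHomeo F A B) : p '' A = B :=
  (p.image_eq_inter_preimage subset_rfl).trans (inter_eq_left.2 p.mapsTo_invFun)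

theorem isClopen_image (p : PartialPairHomeo F A B) (hB : IsClopen B) {A₀ : Set E}
    (hA₀ : IsClopen A₀) (h : A₀ ⊆ A) : IsClopen (p '' A₀) := by
  rw [p.image_eq_inter_preimage h]
  exact ⟨p.continuousOn_invFun.preimage_isClosed_of_isClosed hB.1 hA₀.1,
    p.continuousOn_invFun.isOpen_inter_preimage hB.2 hA₀.2⟩

def ofEquivPerm {g : Equiv.Perm E} (hg : g ∈ EndsHomeo F) (h : g '' A = B) :
    PartialPairHomeo F A B where
  toFun := g
  invFun := g.symm
  mapsTo := h ▸ mapsTo_image _ _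
  mapsTo_invFun := by
    rw [← h]
    rintro _ ⟨x, hx, rfl⟩
    simpa using hx
  leftInvOn x _ := g.symm_apply_apply x
  rightInvOn x _ := g.apply_symm_apply x
  continuousOn := hg.1.continuousOn
  continuousOn_invFun := hg.2.1.continuousOn
  mem_iff x _ := hg.2.2 x

open Classical in
noncomputable def ofHomeomorph (h : A ≃ₜ B) (hF : ∀ x : A, (h x : E) ∈ F ↔ (x : E) ∈ F) :
    PartialPairHomeo F A B where
  toFun x := if hx : x ∈ A then h ⟨x, hx⟩ else x
  invFun y := if hy : y ∈ B then h.symm ⟨y, hy⟩ else y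
  mapsTo x hx := by simp [hx]
  mapsTo_invFun y hy := by simp [hy]
  leftInvOn x hx := by simp [hx]
  rightInvOn y hy := by simp [hy]
  continuousOn := by
    rw [continuousOn_iff_continuous_domRestrict]
    convert continuous_subtype_val.comp h.continuous using 1
    ext x
    simp [x.2]
  continuousOn_invFun := by
    rw [continuousOn_iff_continuous_domRestrict]
    convert continuous_subtype_val.comp h.symm.continuous using 1
    ext y
    simp [y.2]
  mem_iff x hx := by simpa [hx] using hF ⟨x, hx⟩

theorem pairHomeo (p : PartialPairHomeo F A B) : PairHomeo F A B :=
  ⟨{ toFun := p.mapsTo.restrict _ _ _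
     invFun := p.mapsTo_invFun.restrict _ _ _
     left_inv x := Subtype.ext (p.leftInvOn x.2)
     right_inv y := Subtype.ext (p.rightInvOn y.2)
     continuous_toFun := p.continuousOn.mapsToRestrict p.mapsTo
     continuous_invFun := p.continuousOn_invFun.mapsToRestrict p.mapsTo_invFun },
    fun x => p.mem_iff x x.2⟩

open Classical in
noncomputable def swap (p : PartialPairHomeo F A B) (hAB : Disjoint A B) : Equiv.Perm E :=
  Function.Involutive.toPerm (fun x => if x ∈ A then p x else if x ∈ B then p.invFun x else x)
    (by
      intro x
      by_cases hA : x ∈ A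
      · have hB : p x ∉ A := disjoint_right.1 hAB (p.mapsTo hA)
        simp [hA, hB, p.mapsTo hA, p.leftInvOn hA]
      by_cases hB : x ∈ B
      · simp [hA, hB, p.mapsTo_invFun hB, p.rightInvOn hB]
      · simp [hA, hB])

section Swap

variable (p : PartialPairHomeo F A B) (hAB : Disjoint A B)

open Classical in
theorem swap_apply {x : E} :
    p.swap hAB x = if x ∈ A then p x else if x ∈ B then p.invFun x else x := rfl

theorem swap_apply_of_mem_left {x : E} (hx : x ∈ A) : p.swap hAB x = p x := by
  rw [swap_apply, if_pos hx]

theorem swap_apply_of_mem_right {x : E} (hx : x ∈ B) : p.swap hAB x = p.invFun x := by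
  rw [swap_apply, if_neg (disjoint_right.1 hAB hx), if_pos hx]

theorem swap_apply_of_notMem {x : E} (hA : x ∉ A) (hB : x ∉ B) : p.swap hAB x = x := by
  rw [swap_apply, if_neg hA, if_neg hB]

theorem swap_image_left : p.swap hAB '' A = B :=
  (image_congr fun _ hx => p.swap_apply_of_mem_left hAB hx).trans p.image_eq

theorem swap_image_right : p.swap hAB '' B = A :=
  (image_congr fun _ hx => p.swap_apply_of_mem_right hAB hx).trans p.symm.image_eq

theorem swap_mem (hA : IsClopen A) (hB : IsClopen B) : p.swap hAB ∈ EndsHomeo F := by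
  have hcont : Continuous (p.swap hAB) := by
    refine continuous_iff_continuousAt.2 fun x => ?_
    by_cases hxA : x ∈ A
    · exact (p.continuousOn.congr fun y hy => p.swap_apply_of_mem_left hAB hy).continuousAt
        (hA.isOpen.mem_nhds hxA)
    by_cases hxB : x ∈ B
    · exact (p.continuousOn_invFun.congr fun y hy => p.swap_apply_of_mem_right hAB hy).continuousAt
        (hB.isOpen.mem_nhds hxB)
    refine (continuousOn_id.congr fun y hy => ?_).continuousAt
      ((hA.union hB).compl.isOpen.mem_nhds (by simp [hxA, hxB]))
    simp only [mem_compl_iff, mem_union, not_or] at hy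
    exact p.swap_apply_of_notMem hAB hy.1 hy.2
  refine ⟨hcont, hcont, fun x => ?_⟩
  by_cases hxA : x ∈ A
  · rw [p.swap_apply_of_mem_left hAB hxA, p.mem_iff x hxA]
  by_cases hxB : x ∈ B
  · rw [p.swap_apply_of_mem_right hAB hxB, p.symm_mem_iff hxB]
  · rw [p.swap_apply_of_notMem hAB hxA hxB]

end Swap

end PartialPairHomeo

theorem pairHomeo_iff_nonempty {F A B : Set E} :
    PairHomeo F A B ↔ Nonempty (PartialPairHomeo F A B) :=
  ⟨fun ⟨h, hF⟩ => ⟨.ofHomeomorph h hF⟩, fun ⟨p⟩ => p.pairHomeo⟩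

end

theorem SupportedOn.image_eq {E : Type*} {s : Set E} {g : Equiv.Perm E} (h : SupportedOn s g) :
    g '' s = s := by
  refine Subset.antisymm ?_ fun y hy => ⟨g.symm y, ?_, g.apply_symm_apply y⟩
  · rintro _ ⟨x, hx, rfl⟩
    by_contra hgx
    rw [g.injective (h _ hgx)] at hgx
    exact hgx hx
  · by_contra hy'
    have := h _ hy'
    rw [g.apply_symm_apply] at this
    exact hy' (this ▸ hy)

theorem fixingSubgroup_le_of_smul_eq {G α : Type*} [Group G] [MulAction G α] {N : Subgroup G}
    (hN : N.Normal) {g : G} {s t : Set α} (hg : g • t = s) (h : fixingSubgroup G t ≤ N) :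
    fixingSubgroup G s ≤ N := by
  rw [← SubMulAction.fixingSubgroup_map_conj_eq hg]
  rintro _ ⟨k, hk, rfl⟩
  exact hN.conj_mem k (h hk) g

theorem fixingSubgroup_le_of_partialPairHomeo {E : Type*} [TopologicalSpace E] {F : Set E}
    {N : Subgroup (EndsHomeo F)} (hN : N.Normal) {P : Set E} (hP : IsClopen P)
    (hPN : fixingSubgroup (EndsHomeo F) P ≤ N) {R : Set E} (hR : IsClopen R)
    (hPR : Disjoint P R) (p : PartialPairHomeo F P R) : fixingSubgroup (EndsHomeo F) R ≤ N := by
  refine fixingSubgroup_le_of_smul_eq hN (g := ⟨p.swap hPR, p.swap_mem hPR hP hR⟩) ?_ hPN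
  rw [← image_smul]
  exact p.swap_image_left hPR

section Stable

variable {E : Type*} [TopologicalSpace E] {F : Set E}

def IsStable (F : Set E) (z : E) : Prop :=
  ∀ U : Set E, IsClopen U → z ∈ U → ∃ D ⊆ U, IsClopen D ∧ PairHomeo F D univ

theorem IsStable.endsLE {z : E} (hz : IsStable F z) (y : E) : EndsLE F y z := by
  intro U hU hzU
  obtain ⟨D, hDU, hD, hDE⟩ := hz U hU hzU
  obtain ⟨p⟩ := pairHomeo_iff_nonempty.1 hDE
  exact ⟨D, hDU, hD, univ, isClopen_univ, mem_univ y, p.symm.pairHomeo⟩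

theorem IsStable.of_endsLE {z x : E} (hz : IsStable F z) (h : EndsLE F z x) : IsStable F x := by
  intro U hU hxU
  obtain ⟨D, hDU, hD, V, hV, hzV, hVD⟩ := h U hU hxU
  obtain ⟨C, hCV, hC, hCE⟩ := hz V hV hzV
  obtain ⟨p⟩ := pairHomeo_iff_nonempty.1 hVD
  obtain ⟨q⟩ := pairHomeo_iff_nonempty.1 hCE
  exact ⟨p '' C, ((p.mapsTo.mono_left hCV).image_subset).trans hDU, p.isClopen_image hD hC hCV,
    ((p.restrict hCV).symm.trans q).pairHomeo⟩

theorem SelfSimilarPair.exists_subset_fiber (hss : SelfSimilarPair F) {α : Type*}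
    [TopologicalSpace α] [DiscreteTopology α] [Finite α] {f : E → α} (hf : Continuous f) :
    ∃ x, ∃ D ⊆ f ⁻¹' {f x}, IsClopen D ∧ PairHomeo F D univ := by
  let e := Finite.equivFin (range f)
  obtain ⟨i, D, hD, hDi, hDE⟩ := hss _ (fun i => f ⁻¹' {(e.symm i : α)})
    (fun i => (isClopen_discrete _).preimage hf)
    (fun i => (e.symm i).2)
    (fun i j hij => disjoint_singleton.2 (fun h => hij (e.symm.injective (Subtype.ext h)))
      |>.preimage f)
    (eq_univ_of_forall fun x => mem_iUnion.2 ⟨e ⟨f x, x, rfl⟩, by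
      simp only [Equiv.symm_apply_apply]
      rfl⟩)
  obtain ⟨x, hx⟩ := (e.symm i).2
  exact ⟨x, D, by rwa [hx], hD, hDE⟩

theorem SelfSimilarPair.exists_isStable [CompactSpace E] (hss : SelfSimilarPair F) :
    ∃ z, IsStable F z := by
  by_contra! h
  simp only [IsStable, not_forall, not_exists, not_and] at h
  choose U hU hzU hUD using h
  obtain ⟨t, ht⟩ := isCompact_univ.elim_finite_subcover U (fun z => (hU z).isOpen)
    (fun z _ => mem_iUnion.2 ⟨z, hzU z⟩)
  -- the fibres of `f` form a clopen partition refining the cover by the `U i`, `i ∈ t`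
  let f : E → t → Bool := fun x i => (U i).boolIndicator x
  have hf : Continuous f :=
    continuous_pi fun i => (continuous_boolIndicator_iff_isClopen _).2 (hU i)
  obtain ⟨x, D, hDx, hD, hDE⟩ := hss.exists_subset_fiber hf
  obtain ⟨i, hi, hxi⟩ := mem_iUnion₂.1 (ht (mem_univ x))
  refine hUD i D (fun y hy => ?_) hD hDE
  rw [mem_iff_boolIndicator] at hxi ⊢
  exact (congrFun (hDx hy) ⟨i, hi⟩).trans hxi

theorem SelfSimilarPair.isStable_of_mem_maxSet [CompactSpace E] (hss : SelfSimilarPair F)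
    {x : E} (hx : x ∈ MaxSet F) : IsStable F x := by
  obtain ⟨z, hz⟩ := hss.exists_isStable
  exact hz.of_endsLE (hx z (hz.endsLE x))

theorem IsStable.exists_copy [CompactSpace E] [T2Space E] [TotallyDisconnectedSpace E] {z : E}
    (hz : IsStable F z) {U : Set E} (hU : U ∈ 𝓝 z) {K : Set E} (hK : IsClopen K) :
    ∃ A ⊆ U, IsClopen A ∧ Nonempty (PartialPairHomeo F K A) := by
  obtain ⟨V, ⟨hzV, hV⟩, hVU⟩ := (nhds_basis_clopen z).mem_iff.1 hU
  obtain ⟨D, hDV, hD, hDE⟩ := hz V hV hzV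
  obtain ⟨p⟩ := pairHomeo_iff_nonempty.1 hDE
  exact ⟨p.symm '' K, ((p.symm.mapsTo.mono_left (subset_univ K)).image_subset).trans
    (hDV.trans hVU), p.symm.isClopen_image hD hK (subset_univ K),
    ⟨p.symm.restrict (subset_univ K)⟩⟩

end Stable

theorem exists_ne_mem_of_homeomorph_cantor {X : Type*} [TopologicalSpace X] {S : Set X}
    (e : S ≃ₜ (ℕ → Bool)) {x : X} (hx : x ∈ S) {U : Set X} (hU : U ∈ 𝓝 x) :
    ∃ y ∈ S ∩ U, y ≠ x := by
  set c := e ⟨x, hx⟩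
  -- flipping the `n`-th coordinate of `c` gives points `≠ c` converging to `c`
  let u : ℕ → ℕ → Bool := fun n => update c n (!c n)
  have hu : Tendsto u atTop (𝓝 c) := tendsto_pi_nhds.2 fun i =>
    tendsto_const_nhds.congr' <| (eventually_gt_atTop i).mono fun n hn =>
      (update_of_ne hn.ne _ c).symm
  have hv : Tendsto (fun n => (e.symm (u n) : X)) atTop (𝓝 x) := by
    have h := ((continuous_subtype_val.comp e.symm.continuous).tendsto c).comp hu
    rwa [comp_apply, show e.symm c = ⟨x, hx⟩ from e.symm_apply_apply _] at h
  obtain ⟨n, hn⟩ := (hv.eventually hU).exists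
  refine ⟨e.symm (u n), ⟨(e.symm (u n)).2, hn⟩, fun h => ?_⟩
  have hun : u n = c := by
    rw [← e.apply_symm_apply (u n), show e.symm (u n) = ⟨x, hx⟩ from Subtype.ext h]
  simpa [u] using congrFun hun n

theorem SelfSimilarPair.exists_isStable_ne_of_mem_nhds {E : Type*} [TopologicalSpace E]
    [CompactSpace E] {F : Set E} (hss : SelfSimilarPair F) (e : MaxSet F ≃ₜ (ℕ → Bool)) {x : E}
    (hx : x ∈ MaxSet F) {U : Set E} (hU : U ∈ 𝓝 x) : ∃ y ∈ U, y ≠ x ∧ IsStable F y := by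
  obtain ⟨y, ⟨hyM, hyU⟩, hyx⟩ := exists_ne_mem_of_homeomorph_cantor e hx hU
  exact ⟨y, hyU, hyx, hss.isStable_of_mem_maxSet hyM⟩

theorem exists_seq_pairwiseDisjoint_tendsto {X : Type*} [TopologicalSpace X] [CompactSpace X]
    [T2Space X] [TotallyDisconnectedSpace X] [FirstCountableTopology X] {x : X}
    {p : Set X → Prop} (h : ∀ U, IsClopen U → x ∈ U → ∃ A ⊆ U, IsClopen A ∧ x ∉ A ∧ p A) :
    ∃ A : ℕ → Set X, (∀ k, IsClopen (A k) ∧ p (A k)) ∧ Pairwise (Disjoint on A) ∧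
      Tendsto A atTop (𝓝 x).smallSets := by
  obtain ⟨b, hb⟩ := (𝓝 x).exists_antitone_basis
  let N := {U : Set X // IsClopen U ∧ x ∈ U}
  choose A hAU hA hxA hpA using fun U : N => h U.1 U.2.1 U.2.2
  have hnext (k : ℕ) (U : N) : ∃ V : N, V.1 ⊆ (U.1 \ A U) ∩ b k := by
    obtain ⟨V, ⟨hxV, hV⟩, hVU⟩ := (nhds_basis_clopen x).mem_iff.1 <|
      inter_mem ((U.2.1.diff (hA U)).isOpen.mem_nhds ⟨U.2.2, hxA U⟩) (hb.mem k)
    exact ⟨⟨V, hV, hxV⟩, hVU⟩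
  choose next hnext using hnext
  -- nested clopen neighbourhoods with `U (k + 1) ⊆ (U k \ A (U k)) ∩ b k`
  let U : ℕ → N := fun k => Nat.rec ⟨univ, isClopen_univ, mem_univ x⟩ next k
  have hU : Antitone fun k => (U k).1 := antitone_nat_of_succ_le fun k =>
    (hnext k (U k)).trans (inter_subset_left.trans sdiff_subset)
  refine ⟨fun k => A (U k), fun k => ⟨hA _, hpA _⟩, fun k l hkl => ?_, ?_⟩
  · wlog hlt : k < l generalizing k l
    · exact (this l k hkl.symm (lt_of_le_of_ne (not_lt.1 hlt) hkl.symm)).symm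
    exact disjoint_left.2 fun y hyk hyl =>
      ((hnext k (U k)).trans inter_subset_left (hU (Nat.succ_le_of_lt hlt) (hAU _ hyl))).2 hyk
  · refine (tendsto_add_atTop_iff_nat 1).1 (hb.tendsto_smallSets.smallSets_mono ?_)
    exact Eventually.of_forall fun k =>
      (hAU _).trans ((hnext k (U k)).trans inter_subset_right)

def pairSwap : Equiv.Perm ℤ :=
  Function.Involutive.toPerm (fun n => if Even n then n + 1 else n - 1) fun n => by
    simp only [Int.even_iff]
    split_ifs <;> omega

theorem pairSwap_apply (n : ℤ) : pairSwap n = if Even n then n + 1 else n - 1 := rfl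

theorem pairSwap_pairSwap (n : ℤ) : pairSwap (pairSwap n) = n := by
  simp only [pairSwap_apply, Int.even_iff]
  split_ifs <;> omega

theorem pairSwap_pairSwap_sub_one_add_one (n : ℤ) :
    pairSwap (pairSwap (n - 1) + 1) = if Even n then n - 2 else n + 2 := by
  simp only [pairSwap_apply, Int.even_iff]
  split_ifs <;> omega

structure CopyChain {E : Type*} [TopologicalSpace E] (F K : Set E) where
  H : ℤ → Set E
  isClopen : ∀ n, IsClopen (H n)
  pairwise_disjoint : Pairwise (Disjoint on H)
  limit : E
  tendsto : Tendsto H cofinite (𝓝 limit).smallSets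
  ψ : ∀ n, PartialPairHomeo F K (H n)

namespace CopyChain

section Glue

variable {E : Type*} [TopologicalSpace E] {F K : Set E} (C : CopyChain F K)
  (π : Equiv.Perm ℤ) (φ : ℤ → PartialPairHomeo F K K)

theorem eq_of_mem {x : E} {m n : ℤ} (hm : x ∈ C.H m) (hn : x ∈ C.H n) : m = n :=
  by_contra fun h => disjoint_left.1 (C.pairwise_disjoint h) hm hn

theorem exists_eq_ψ_or_forall_notMem (x : E) :
    (∃ m, ∃ w ∈ K, C.ψ m w = x) ∨ ∀ n, x ∉ C.H n := by
  by_cases hx : ∃ n, x ∈ C.H n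
  · obtain ⟨m, hm⟩ := hx
    exact Or.inl ⟨m, _, (C.ψ m).mapsTo_invFun hm, (C.ψ m).rightInvOn hm⟩
  · exact Or.inr (not_exists.1 hx)

open Classical in
noncomputable def glueFun (x : E) : E :=
  if h : ∃ n, x ∈ C.H n then C.ψ (π h.choose) (φ h.choose ((C.ψ h.choose).invFun x)) else x

variable {C π φ}

theorem glueFun_of_mem {x : E} {n : ℤ} (hx : x ∈ C.H n) :
    C.glueFun π φ x = C.ψ (π n) (φ n ((C.ψ n).invFun x)) := by
  have h : ∃ n, x ∈ C.H n := ⟨n, hx⟩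
  rw [glueFun, dif_pos h, C.eq_of_mem h.choose_spec hx]

theorem glueFun_of_forall_notMem {x : E} (hx : ∀ n, x ∉ C.H n) : C.glueFun π φ x = x := by
  rw [glueFun, dif_neg (not_exists.2 hx)]

theorem glueFun_ψ {w : E} (hw : w ∈ K) (m : ℤ) :
    C.glueFun π φ (C.ψ m w) = C.ψ (π m) (φ m w) := by
  rw [glueFun_of_mem ((C.ψ m).mapsTo hw), (C.ψ m).leftInvOn hw]

variable (C π φ)

theorem mapsTo_glueFun (n : ℤ) : MapsTo (C.glueFun π φ) (C.H n) (C.H (π n)) := fun x hx => by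
  rw [glueFun_of_mem hx]
  exact (C.ψ (π n)).mapsTo ((φ n).mapsTo ((C.ψ n).mapsTo_invFun hx))

theorem glueFun_mem_iff (x : E) : C.glueFun π φ x ∈ F ↔ x ∈ F := by
  rcases C.exists_eq_ψ_or_forall_notMem x with ⟨m, w, hw, rfl⟩ | hx
  · rw [glueFun_ψ hw, (C.ψ (π m)).mem_iff _ ((φ m).mapsTo hw), (φ m).mem_iff _ hw,
      (C.ψ m).mem_iff _ hw]
  · rw [glueFun_of_forall_notMem hx]

theorem glueFun_inv_glueFun (x : E) :
    C.glueFun π⁻¹ (fun n => (φ (π⁻¹ n)).symm) (C.glueFun π φ x) = x := by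
  rcases C.exists_eq_ψ_or_forall_notMem x with ⟨m, w, hw, rfl⟩ | hx
  · rw [glueFun_ψ hw, glueFun_ψ ((φ m).mapsTo hw), Equiv.Perm.coe_inv, Equiv.symm_apply_apply]
    exact congrArg (C.ψ m) ((φ m).leftInvOn hw)
  · rw [glueFun_of_forall_notMem hx, glueFun_of_forall_notMem hx]

theorem glueFun_glueFun_inv (x : E) :
    C.glueFun π φ (C.glueFun π⁻¹ (fun n => (φ (π⁻¹ n)).symm) x) = x := by
  rcases C.exists_eq_ψ_or_forall_notMem x with ⟨m, w, hw, rfl⟩ | hx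
  · rw [glueFun_ψ hw, glueFun_ψ (φ := φ) ((φ (π⁻¹ m)).symm.mapsTo hw), Equiv.Perm.coe_inv,
      Equiv.apply_symm_apply]
    exact congrArg (C.ψ m) ((φ (π⁻¹ m)).rightInvOn hw)
  · rw [glueFun_of_forall_notMem hx, glueFun_of_forall_notMem hx]

theorem finite_setOf_nonempty_inter_not_subset {O : Set E} (hO : IsClopen O) :
    {n | (C.H n ∩ O).Nonempty ∧ ¬C.H (π n) ⊆ O}.Finite := by
  by_cases h : C.limit ∈ O
  · have := eventually_cofinite.1 (tendsto_smallSets_iff.1 C.tendsto O (hO.isOpen.mem_nhds h))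
    exact (this.preimage π.injective.injOn).subset fun n hn => hn.2
  · have := eventually_cofinite.1
      (tendsto_smallSets_iff.1 C.tendsto Oᶜ (hO.isClosed.isOpen_compl.mem_nhds h))
    exact this.subset fun n ⟨⟨x, hxn, hxO⟩, _⟩ hsub => hsub hxn hxO

theorem continuous_glueFun [CompactSpace E] [T2Space E] [TotallyDisconnectedSpace E] :
    Continuous (C.glueFun π φ) := by
  refine continuous_iff_continuousAt.2 fun x => ?_
  by_cases hx : ∃ n, x ∈ C.H n
  · obtain ⟨n, hn⟩ := hx
    have : ContinuousOn (C.glueFun π φ) (C.H n) :=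
      (((C.ψ (π n)).continuousOn.comp (φ n).continuousOn (φ n).mapsTo).comp
        (C.ψ n).continuousOn_invFun (C.ψ n).mapsTo_invFun).congr fun y hy => glueFun_of_mem hy
    exact this.continuousAt ((C.isClopen n).isOpen.mem_nhds hn)
  replace hx := not_exists.1 hx
  rw [ContinuousAt, glueFun_of_forall_notMem hx]
  refine (nhds_basis_clopen x).tendsto_right_iff.2 fun O ⟨hxO, hO⟩ => ?_
  -- away from finitely many `H n`, the glued map sends `O` into itself
  have hclosed := (C.finite_setOf_nonempty_inter_not_subset π hO).isClosed_biUnion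
    fun n _ => (C.isClopen n).isClosed
  filter_upwards [hO.isOpen.mem_nhds hxO,
    hclosed.isOpen_compl.mem_nhds fun h => (mem_iUnion₂.1 h).elim fun n ⟨_, hn⟩ => hx n hn]
    with y hyO hy
  rcases C.exists_eq_ψ_or_forall_notMem y with ⟨m, w, hw, rfl⟩ | hyS
  · have hm := (C.ψ m).mapsTo hw
    by_contra hnot
    refine hy (mem_iUnion₂.2 ⟨m, ⟨⟨_, hm, hyO⟩, fun hsub => hnot ?_⟩, hm⟩)
    exact hsub (C.mapsTo_glueFun π φ m hm)
  · rwa [glueFun_of_forall_notMem hyS]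

variable [CompactSpace E] [T2Space E] [TotallyDisconnectedSpace E]

noncomputable def glue : EndsHomeo F :=
  ⟨⟨C.glueFun π φ, C.glueFun π⁻¹ fun n => (φ (π⁻¹ n)).symm, C.glueFun_inv_glueFun π φ,
      C.glueFun_glueFun_inv π φ⟩,
    C.continuous_glueFun π φ, C.continuous_glueFun π⁻¹ fun n => (φ (π⁻¹ n)).symm,
    C.glueFun_mem_iff π φ⟩

variable {C π φ}

theorem glue_smul_ψ {w : E} (hw : w ∈ K) (m : ℤ) : C.glue π φ • C.ψ m w = C.ψ (π m) (φ m w) :=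
  glueFun_ψ hw m

theorem glue_inv_smul_ψ {w : E} (hw : w ∈ K) (m : ℤ) :
    (C.glue π φ)⁻¹ • C.ψ m w = C.ψ (π⁻¹ m) ((φ (π⁻¹ m)).invFun w) :=
  glueFun_ψ (π := π⁻¹) (φ := fun n => (φ (π⁻¹ n)).symm) hw m

theorem glue_smul_of_forall_notMem {x : E} (hx : ∀ n, x ∉ C.H n) (π : Equiv.Perm ℤ)
    (φ : ℤ → PartialPairHomeo F K K) : C.glue π φ • x = x :=
  glueFun_of_forall_notMem hx

theorem glue_inv_smul_of_forall_notMem {x : E} (hx : ∀ n, x ∉ C.H n) (π : Equiv.Perm ℤ)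
    (φ : ℤ → PartialPairHomeo F K K) : (C.glue π φ)⁻¹ • x = x :=
  glueFun_of_forall_notMem (π := π⁻¹) (φ := fun n => (φ (π⁻¹ n)).symm) hx

end Glue

section Involution

variable {E : Type*} [TopologicalSpace E] [CompactSpace E] [T2Space E]
  [TotallyDisconnectedSpace E] {F K : Set E} (C : CopyChain F K)

noncomputable def tau : EndsHomeo F := C.glue pairSwap fun _ => .refl F K

noncomputable def shift : EndsHomeo F := C.glue (Equiv.addRight 1) fun _ => .refl F K

noncomputable def kappa : EndsHomeo F := C.tau * (C.shift * C.tau * C.shift⁻¹)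

variable {C}

theorem tau_smul_ψ {w : E} (hw : w ∈ K) (m : ℤ) : C.tau • C.ψ m w = C.ψ (pairSwap m) w :=
  glue_smul_ψ hw m

theorem shift_smul_ψ {w : E} (hw : w ∈ K) (m : ℤ) : C.shift • C.ψ m w = C.ψ (m + 1) w :=
  glue_smul_ψ hw m

theorem shift_inv_smul_ψ {w : E} (hw : w ∈ K) (m : ℤ) : C.shift⁻¹ • C.ψ m w = C.ψ (m - 1) w :=
  glue_inv_smul_ψ hw m

theorem kappa_smul_ψ {w : E} (hw : w ∈ K) (n : ℤ) :
    C.kappa • C.ψ n w = C.ψ (if Even n then n - 2 else n + 2) w := by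
  simp only [kappa, mul_smul]
  rw [shift_inv_smul_ψ hw, tau_smul_ψ hw, shift_smul_ψ hw, tau_smul_ψ hw,
    pairSwap_pairSwap_sub_one_add_one]

theorem kappa_smul_of_forall_notMem {x : E} (hx : ∀ n, x ∉ C.H n) : C.kappa • x = x := by
  simp only [kappa, tau, shift, mul_smul, glue_smul_of_forall_notMem hx,
    glue_inv_smul_of_forall_notMem hx]

variable (C)

theorem tau_sq : C.tau ^ 2 = 1 := by
  refine Subtype.ext (Equiv.ext fun x => ?_)
  change (C.tau * C.tau) • x = x
  rw [mul_smul]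
  rcases C.exists_eq_ψ_or_forall_notMem x with ⟨m, w, hw, rfl⟩ | hx
  · rw [tau_smul_ψ hw, tau_smul_ψ hw, pairSwap_pairSwap]
  · rw [tau, glue_smul_of_forall_notMem hx, glue_smul_of_forall_notMem hx]

theorem tau_ne_one (hK : K.Nonempty) : C.tau ≠ 1 := by
  obtain ⟨w, hw⟩ := hK
  intro h
  have h1 : C.tau • C.ψ 0 w ∈ C.H 1 := by
    rw [tau_smul_ψ hw]
    exact (C.ψ _).mapsTo hw
  rw [h, one_smul] at h1
  exact one_ne_zero (C.eq_of_mem h1 ((C.ψ 0).mapsTo hw))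

noncomputable def conjZero (g : EndsHomeo F) (hg : SupportedOn (C.H 0) (g : Equiv.Perm E)) :
    PartialPairHomeo F K K :=
  (C.ψ 0).trans ((PartialPairHomeo.ofEquivPerm g.2 hg.image_eq).trans (C.ψ 0).symm)

noncomputable def evenProduct (q : PartialPairHomeo F K K) : EndsHomeo F :=
  C.glue 1 fun n => if 0 ≤ n ∧ Even n then q else .refl F K

theorem eq_evenProduct_commutator (g : EndsHomeo F) (hg : SupportedOn (C.H 0) (g : Equiv.Perm E)) :
    g = C.evenProduct (C.conjZero g hg) * C.kappa⁻¹ * (C.evenProduct (C.conjZero g hg))⁻¹ *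
      C.kappa := by
  set q := C.conjZero g hg
  refine Subtype.ext (Equiv.ext fun x => ?_)
  change g • x = (C.evenProduct q * C.kappa⁻¹ * (C.evenProduct q)⁻¹ * C.kappa) • x
  simp only [mul_smul, evenProduct]
  rcases C.exists_eq_ψ_or_forall_notMem x with ⟨n, w, hw, rfl⟩ | hx
  swap
  · rw [show g • x = x from hg x (hx 0), kappa_smul_of_forall_notMem hx, glue_inv_smul_of_forall_notMem hx,
      inv_smul_eq_iff.2 (kappa_smul_of_forall_notMem hx).symm, glue_smul_of_forall_notMem hx]
  -- `κ` moves the copies `H n`, `n ≥ 0` even, on which `evenProduct q` acts, down by two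
  set k := if Even n then n - 2 else n + 2
  have hk : (0 ≤ k ∧ Even k) ↔ (0 ≤ n ∧ Even n) ∧ n ≠ 0 := by
    simp only [k, Int.even_iff]
    split_ifs <;> omega
  set φ : ℤ → PartialPairHomeo F K K := fun n => if 0 ≤ n ∧ Even n then q else .refl F K
  have hw' : (φ k).invFun w ∈ K := (φ k).mapsTo_invFun hw
  rw [kappa_smul_ψ hw, glue_inv_smul_ψ hw, inv_one, Equiv.Perm.one_apply,
    ← kappa_smul_ψ hw', inv_smul_smul, glue_smul_ψ hw', Equiv.Perm.one_apply]
  by_cases hn : n = 0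
  · subst hn
    have hgψ : g • C.ψ 0 w ∈ C.H 0 := hg.image_eq.subset (mem_image_of_mem _ ((C.ψ 0).mapsTo hw))
    simp only [φ, if_neg fun h => (hk.1 h).2 rfl,
      if_pos (show 0 ≤ (0 : ℤ) ∧ Even (0 : ℤ) by decide)]
    exact ((C.ψ 0).rightInvOn hgψ).symm
  rw [show g • C.ψ n w = C.ψ n w from hg _ fun h => hn (C.eq_of_mem ((C.ψ n).mapsTo hw) h)]
  by_cases hS : 0 ≤ n ∧ Even n
  · simp only [φ, if_pos hS, if_pos (hk.2 ⟨hS, hn⟩)]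
    exact congrArg (C.ψ n) (q.rightInvOn hw).symm
  · simp only [φ, if_neg hS, if_neg (fun h => hS (hk.1 h).1)]
    rfl

theorem fixingSubgroup_compl_zero_le_normalClosure_tau :
    fixingSubgroup (EndsHomeo F) (C.H 0)ᶜ ≤ Subgroup.normalClosure {C.tau} := by
  intro g hg
  have hN : (Subgroup.normalClosure {C.tau}).Normal := Subgroup.normalClosure_normal
  have hτ : C.tau ∈ Subgroup.normalClosure {C.tau} := Subgroup.subset_normalClosure rfl
  have hκ : C.kappa ∈ Subgroup.normalClosure {C.tau} := mul_mem hτ (hN.conj_mem _ hτ _)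
  rw [C.eq_evenProduct_commutator g ((mem_fixingSubgroup_iff _).1 hg)]
  exact mul_mem (hN.conj_mem _ (inv_mem hκ) _) hκ

theorem fixingSubgroup_compl_le_normalClosure_tau (hK : IsClopen K) (hKH : Disjoint K (C.H 0)) :
    fixingSubgroup (EndsHomeo F) Kᶜ ≤ Subgroup.normalClosure {C.tau} := by
  refine fixingSubgroup_le_of_smul_eq Subgroup.normalClosure_normal
    (g := ⟨(C.ψ 0).swap hKH, (C.ψ 0).swap_mem hKH hK (C.isClopen 0)⟩) ?_
    C.fixingSubgroup_compl_zero_le_normalClosure_tau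
  rw [← image_smul]
  exact (image_compl_eq (Equiv.bijective _)).trans (congrArg _ ((C.ψ 0).swap_image_right hKH))

end Involution

end CopyChain

theorem exists_copyChain {E : Type*} [TopologicalSpace E] [CompactSpace E] [T2Space E]
    [TotallyDisconnectedSpace E] [FirstCountableTopology E] {F : Set E} {x₀ : E}
    (hx₀ : ∀ U ∈ 𝓝 x₀, ∃ y ∈ U, y ≠ x₀ ∧ IsStable F y) {Q : Set E} (hQ : IsClopen Q)
    (hx₀Q : x₀ ∈ Q) : ∃ C : CopyChain F Qᶜ, ∀ n, C.H n ⊆ Q := by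
  have h (U : Set E) (hU : IsClopen U) (hx₀U : x₀ ∈ U) : ∃ A ⊆ U, IsClopen A ∧ x₀ ∉ A ∧
      A ⊆ Q ∧ Nonempty (PartialPairHomeo F Qᶜ A) := by
    obtain ⟨y, hyUQ, hyx₀, hy⟩ := hx₀ (U ∩ Q)
      (inter_mem (hU.isOpen.mem_nhds hx₀U) (hQ.isOpen.mem_nhds hx₀Q))
    obtain ⟨A, hAsub, hA, hp⟩ := hy.exists_copy
      (inter_mem ((hU.inter hQ).isOpen.mem_nhds hyUQ) (isOpen_compl_singleton.mem_nhds hyx₀))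
      hQ.compl
    exact ⟨A, fun a ha => (hAsub ha).1.1, hA, fun h => (hAsub h).2 rfl,
      fun a ha => (hAsub ha).1.2, hp⟩
  obtain ⟨A, hA, hdisj, htend⟩ := exists_seq_pairwiseDisjoint_tendsto h
  let e := Equiv.intEquivNat
  have he : Tendsto e cofinite atTop := Nat.cofinite_eq_atTop ▸ e.injective.tendsto_cofinite
  exact ⟨⟨fun n => A (e n), fun n => (hA _).1, hdisj.comp_of_injective e.injective, x₀,
    htend.comp he, fun n => (hA (e n)).2.2.some⟩, fun n => (hA _).2.1⟩

section Fragmentation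

variable {E : Type*} [TopologicalSpace E] {F : Set E}

theorem exists_inv_mul_mem_fixingSubgroup {g : EndsHomeo F} {R : Set E} (hR : IsClopen R)
    (hRg : Disjoint R ((g : Equiv.Perm E) '' R)) :
    ∃ a : EndsHomeo F, a⁻¹ * g ∈ fixingSubgroup (EndsHomeo F) R ∧
      ∀ x ∉ R, x ∉ (g : Equiv.Perm E) '' R → a • x = x := by
  have hgR : IsClopen ((g : Equiv.Perm E) '' R) := by
    rw [Equiv.image_eq_preimage_symm]
    exact hR.preimage g.2.2.1
  let p := PartialPairHomeo.ofEquivPerm g.2 (A := R) rfl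
  refine ⟨⟨p.swap hRg, p.swap_mem hRg hR hgR⟩, (mem_fixingSubgroup_iff _).2 fun x hx => ?_,
    fun x h₁ h₂ => p.swap_apply_of_notMem hRg h₁ h₂⟩
  rw [mul_smul]
  -- the swap is definitionally its own inverse
  change p.swap hRg ((g : Equiv.Perm E) x) = x
  rw [p.swap_apply_of_mem_right hRg (mem_image_of_mem _ hx)]
  exact (g : Equiv.Perm E).symm_apply_apply x

variable [CompactSpace E] [T2Space E] [TotallyDisconnectedSpace E] {N : Subgroup (EndsHomeo F)}
  {P : Set E}

theorem mem_of_smul_ne_self (hN : N.Normal) (hP : IsClopen P)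
    (hPN : fixingSubgroup (EndsHomeo F) P ≤ N) {w y : E} (hw : IsStable F w) (hy : IsStable F y)
    (hwP : w ∉ P) (hyP : y ∉ P) (hyw : y ≠ w) {g : EndsHomeo F} (hgw : g • w ≠ w)
    (hyg : y ≠ g • w) : g ∈ N := by
  obtain ⟨W₂, ⟨hgwW₂, hW₂⟩, hW₂sub⟩ := (nhds_basis_clopen (g • w)).mem_iff.1 <|
    ((finite_singleton y).insert w).isClosed.isOpen_compl.mem_nhds (by simp [hgw, hyg.symm])
  obtain ⟨W₁, ⟨hwW₁, hW₁⟩, hW₁sub⟩ := (nhds_basis_clopen w).mem_iff.1 <|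
    ((hP.union hW₂).isClosed.union isClosed_singleton).isOpen_compl.mem_nhds (by
      simp only [mem_compl_iff, mem_union, mem_singleton_iff, not_or]
      exact ⟨⟨hwP, fun h => hW₂sub h (mem_insert w _)⟩, hyw.symm⟩)
  -- `g` agrees on a copy `R` of `P` near `w` with some `a` that fixes a copy `R'` of `P` near `y`
  obtain ⟨R, hRsub, hR, ⟨pR⟩⟩ := hw.exists_copy (inter_mem (hW₁.isOpen.mem_nhds hwW₁)
    (g.2.1.continuousAt.preimage_mem_nhds (hW₂.isOpen.mem_nhds hgwW₂))) hP
  obtain ⟨a, haR, ha⟩ := exists_inv_mul_mem_fixingSubgroup (g := g) hR <|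
    disjoint_left.2 fun x hxR ⟨r, hr, hrx⟩ =>
      hW₁sub (hRsub hxR).1 (Or.inl (Or.inr (hrx ▸ (hRsub hr).2)))
  obtain ⟨R', hR'sub, hR', ⟨pR'⟩⟩ := hy.exists_copy
    (((hP.union hW₁).union hW₂).isClosed.isOpen_compl.mem_nhds
      (by simpa [hyP] using ⟨fun h => hW₁sub h (Or.inr rfl), fun h => hW₂sub h (by simp)⟩)) hP
  have haN : a⁻¹ * g ∈ N := fixingSubgroup_le_of_partialPairHomeo hN hP hPN hR
    (disjoint_left.2 fun x hxP hxR => hW₁sub (hRsub hxR).1 (Or.inl (Or.inl hxP))) pR haR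
  have ha : a ∈ N := fixingSubgroup_le_of_partialPairHomeo hN hP hPN hR'
    (disjoint_left.2 fun x hxP hxR' => hR'sub hxR' (Or.inl (Or.inl hxP))) pR'
    ((mem_fixingSubgroup_iff _).2 fun x hx =>
      ha x (fun hxR => hR'sub hx (Or.inl (Or.inr (hRsub hxR).1)))
        fun ⟨r, hr, hrx⟩ => hR'sub hx (Or.inr (hrx ▸ (hRsub hr).2)))
  simpa using mul_mem ha haN

theorem exists_mem_smul_ne_self (hP : IsClopen P) (hPN : fixingSubgroup (EndsHomeo F) P ≤ N)
    {x₁ x₂ : E} (h₂ : IsStable F x₂) (h₁P : x₁ ∉ P) (h₂P : x₂ ∉ P) (h₁₂ : x₁ ≠ x₂) :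
    ∃ σ ∈ N, σ • x₁ ≠ x₁ := by
  obtain ⟨V, ⟨hx₁V, hV⟩, hVsub⟩ := (nhds_basis_clopen x₁).mem_iff.1 <|
    (hP.isClosed.union (isClosed_singleton (x := x₂))).isOpen_compl.mem_nhds (by simp [h₁P, h₁₂])
  obtain ⟨V', hV'sub, hV', ⟨p⟩⟩ := h₂.exists_copy
    ((hP.union hV).isClosed.isOpen_compl.mem_nhds
      (by simpa [h₂P] using fun h => hVsub h (Or.inr rfl))) hV
  have hVV' : Disjoint V V' := disjoint_left.2 fun x hx hx' => hV'sub hx' (Or.inr hx)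
  refine ⟨⟨p.swap hVV', p.swap_mem hVV' hV hV'⟩, hPN <| (mem_fixingSubgroup_iff _).2 fun x hx =>
    p.swap_apply_of_notMem hVV' (fun hxV => hVsub hxV (Or.inl hx))
      fun hxV' => hV'sub hxV' (Or.inl hx), fun h => ?_⟩
  have : p.swap hVV' x₁ ∈ V' := by
    rw [p.swap_apply_of_mem_left hVV' hx₁V]
    exact p.mapsTo hx₁V
  exact disjoint_left.1 hVV' hx₁V (h ▸ this)

theorem eq_top_of_fixingSubgroup_le (hN : N.Normal) (hP : IsClopen P)
    (hPN : fixingSubgroup (EndsHomeo F) P ≤ N) {x₁ x₂ x₃ : E} (h₁ : IsStable F x₁)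
    (h₂ : IsStable F x₂) (h₃ : IsStable F x₃) (h₁P : x₁ ∉ P) (h₂P : x₂ ∉ P) (h₃P : x₃ ∉ P)
    (h₁₂ : x₁ ≠ x₂) (h₁₃ : x₁ ≠ x₃) (h₂₃ : x₂ ≠ x₃) : N = ⊤ := by
  have hmove (g : EndsHomeo F) (hg : g • x₁ ≠ x₁) : g ∈ N := by
    by_cases h : x₂ = g • x₁
    · exact mem_of_smul_ne_self hN hP hPN h₁ h₃ h₁P h₃P h₁₃.symm hg fun h' => h₂₃ (h.trans h'.symm)
    · exact mem_of_smul_ne_self hN hP hPN h₁ h₂ h₁P h₂P h₁₂.symm hg h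
  obtain ⟨σ, hσN, hσ⟩ := exists_mem_smul_ne_self hP hPN h₂ h₁P h₂P h₁₂
  refine (Subgroup.eq_top_iff' N).2 fun g => ?_
  by_cases hg : g • x₁ = x₁
  · have hgσ : g * σ ∈ N := hmove _ fun h => hσ (smul_left_cancel g (by rw [← mul_smul, h, hg]))
    simpa using mul_mem hgσ (inv_mem hσN)
  · exact hmove g hg

end Fragmentation

variable {E : Type*} [TopologicalSpace E] [Nonempty E] [CompactSpace E]
  [TopologicalSpace.MetrizableSpace E] [TotallyDisconnectedSpace E]

theorem endsHomeo_normally_generated_by_involution_general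
    (F : Set E) (huss : UniformlySelfSimilar F) :
    ∃ τ : ↥(EndsHomeo F), τ ^ 2 = 1 ∧ τ ≠ 1 ∧
      Subgroup.normalClosure ({τ} : Set ↥(EndsHomeo F)) = ⊤ := by
  obtain ⟨hss, -, ⟨e⟩⟩ := huss
  have : Infinite (MaxSet F) := e.toEquiv.infinite_iff.2 inferInstance
  let x : ℕ → E := fun n => Infinite.natEmbedding (MaxSet F) n
  have hx : Injective x := Subtype.val_injective.comp (Infinite.natEmbedding _).injective
  have hstable (n : ℕ) : IsStable F (x n) :=
    hss.isStable_of_mem_maxSet (Infinite.natEmbedding (MaxSet F) n).2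
  obtain ⟨Q, ⟨hx₀Q, hQ⟩, hQsub⟩ := (nhds_basis_clopen (x 0)).mem_iff.1 <|
    (((finite_singleton (x 3)).insert (x 2)).insert (x 1)).isClosed.isOpen_compl.mem_nhds
      (by simp [hx.ne])
  have hxQ (n : ℕ) (hn : n ∈ ({1, 2, 3} : Set ℕ)) : x n ∉ Q := fun h =>
    hQsub h (by rcases hn with rfl | rfl | rfl <;> simp)
  obtain ⟨C, hCQ⟩ := exists_copyChain
    (fun U => hss.exists_isStable_ne_of_mem_nhds e (Infinite.natEmbedding (MaxSet F) 0).2) hQ hx₀Q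
  refine ⟨C.tau, C.tau_sq, C.tau_ne_one ⟨x 1, hxQ 1 (by simp)⟩, ?_⟩
  have hfix := C.fixingSubgroup_compl_le_normalClosure_tau hQ.compl
    (disjoint_compl_left_iff_subset.2 (hCQ 0))
  rw [compl_compl] at hfix
  exact eq_top_of_fixingSubgroup_le Subgroup.normalClosure_normal hQ hfix (hstable 1)
    (hstable 2) (hstable 3) (hxQ 1 (by simp)) (hxQ 2 (by simp)) (hxQ 3 (by simp))
    (hx.ne (by decide)) (hx.ne (by decide)) (hx.ne (by decide))

theorem endsHomeo_normally_generated_by_involution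
    (F : Set E) (hF : IsClosed F) (huss : UniformlySelfSimilar F) :
    ∃ τ : ↥(EndsHomeo F), τ ^ 2 = 1 ∧ τ ≠ 1 ∧
      Subgroup.normalClosure ({τ} : Set ↥(EndsHomeo F)) = ⊤ :=
  endsHomeo_normally_generated_by_involution_general F huss
end

section
/- Let (E,F) be a uniformly self-similar ends space and let H be a half-space of (E,F). Then there exist two disjoint half-spaces H₁, H₂ of (E,F) with H₁ ⊆ H and H₂ ⊆ H. -/
/-! Since `M(E)` is a Cantor space it has no isolated points, so the open set `H ∩ M(E)` contains
two distinct maximal ends; a clopen set separating them cuts `H` into two disjoint half-spaces. -/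

open Filter Set Topology

instance Pi.perfectSpace_of_infinite {ι : Type*} [Infinite ι] {X : ι → Type*}
    [∀ i, TopologicalSpace (X i)] [∀ i, Nontrivial (X i)] : PerfectSpace (∀ i, X i) := by
  classical
  refine perfectSpace_iff_forall_not_isolated.mpr fun f => ?_
  choose g hg using fun i => exists_ne (f i)
  set φ : ι → ∀ i, X i := fun i => Function.update f i (g i)
  have hφ_ne : ∀ i, φ i ≠ f := fun i h => hg i (by simpa [φ] using congrFun h i)
  have hφ : Tendsto φ cofinite (𝓝 f) := by
    refine tendsto_pi_nhds.mpr fun k => tendsto_const_nhds.congr' ?_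
    filter_upwards [eventually_cofinite_ne k] with i hik
    simp [φ, Function.update_of_ne hik.symm]
  exact (tendsto_nhdsWithin_of_tendsto_nhds_of_eventually_within φ hφ
    (Eventually.of_forall hφ_ne)).neBot

theorem Homeomorph.perfectSpace {X Y : Type*} [TopologicalSpace X] [TopologicalSpace Y]
    (e : X ≃ₜ Y) [PerfectSpace Y] : PerfectSpace X := by
  refine perfectSpace_iff_forall_not_isolated.mpr fun x => ?_
  have h : map e (𝓝[≠] x) = 𝓝[≠] (e x) := by
    rw [e.isEmbedding.map_nhdsWithin_eq, image_compl_eq e.bijective, image_singleton]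
  exact (map_neBot_iff e).mp (h ▸ inferInstance)

section HalfSpaces

variable {X : Type*} [TopologicalSpace X] {F H : Set X}

theorem UniformlySelfSimilar.nontrivial_inter_maxSet (hF : UniformlySelfSimilar F)
    (hH : IsOpen H) (hne : (H ∩ MaxSet F).Nonempty) : (H ∩ MaxSet F).Nontrivial := by
  obtain ⟨-, -, ⟨e⟩⟩ := hF
  have := e.perfectSpace
  obtain ⟨x, hxH, hxM⟩ := hne
  have hacc : AccPt (⟨x, hxM⟩ : MaxSet F) (𝓟 (Subtype.val ⁻¹' H)) :=
    (hH.preimage continuous_subtype_val).preperfect _ hxH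
  obtain ⟨y, ⟨-, hyH⟩, hyx⟩ := accPt_iff_nhds.mp hacc _ univ_mem
  exact ⟨x, ⟨hxH, hxM⟩, y, ⟨hyH, y.2⟩, fun h => hyx (Subtype.ext h.symm)⟩

theorem isHalfSpace_of_mem_of_notMem (hH : IsClopen H) {x y : X} (hx : x ∈ H ∩ MaxSet F)
    (hy : y ∈ MaxSet F) (hyH : y ∉ H) : IsHalfSpace F H :=
  ⟨hH, ⟨x, hx⟩,
    (inter_subset_right : H ∩ MaxSet F ⊆ _).ssubset_of_mem_notMem hy fun h => hyH h.1⟩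

theorem exists_disjoint_isHalfSpace_subset [TotallySeparatedSpace X] (hH : IsClopen H)
    (hM : (H ∩ MaxSet F).Nontrivial) :
    ∃ H₁ H₂ : Set X, IsHalfSpace F H₁ ∧ IsHalfSpace F H₂ ∧
      Disjoint H₁ H₂ ∧ H₁ ⊆ H ∧ H₂ ⊆ H := by
  obtain ⟨x, ⟨hxH, hxM⟩, y, ⟨hyH, hyM⟩, hxy⟩ := hM
  obtain ⟨U, hU, hxU, hyU⟩ := exists_isClopen_of_totally_separated hxy
  refine ⟨H ∩ U, H ∩ Uᶜ, ?_, ?_, disjoint_compl_right.mono inter_subset_right inter_subset_right,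
    inter_subset_left, inter_subset_left⟩
  · exact isHalfSpace_of_mem_of_notMem (hH.inter hU) ⟨⟨hxH, hxU⟩, hxM⟩ hyM fun h => hyU h.2
  · exact isHalfSpace_of_mem_of_notMem (hH.inter hU.compl) ⟨⟨hyH, hyU⟩, hyM⟩ hxM fun h => h.2 hxU

end HalfSpaces

variable {E : Type*} [TopologicalSpace E] [Nonempty E] [CompactSpace E]
  [TopologicalSpace.MetrizableSpace E] [TotallyDisconnectedSpace E]

theorem halfspace_contains_two_disjoint_halfspaces_general
    (F : Set E) (huss : UniformlySelfSimilar F)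
    (H : Set E) (hH : IsHalfSpace F H) :
    ∃ H₁ H₂ : Set E, IsHalfSpace F H₁ ∧ IsHalfSpace F H₂ ∧
      Disjoint H₁ H₂ ∧ H₁ ⊆ H ∧ H₂ ⊆ H :=
  exists_disjoint_isHalfSpace_subset hH.1 (huss.nontrivial_inter_maxSet hH.1.isOpen hH.2.1)

theorem halfspace_contains_two_disjoint_halfspaces
    (F : Set E) (hF : IsClosed F) (huss : UniformlySelfSimilar F)
    (H : Set E) (hH : IsHalfSpace F H) :
    ∃ H₁ H₂ : Set E, IsHalfSpace F H₁ ∧ IsHalfSpace F H₂ ∧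
      Disjoint H₁ H₂ ∧ H₁ ⊆ H ∧ H₂ ⊆ H :=
  halfspace_contains_two_disjoint_halfspaces_general F huss H hH
end
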